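/- arXiv:2009.12511 — 2 statements merged into one kernel-verified Lean document; each statement's English description precedes it below -/
import Mathlib

section
/- Fix a target τ ∈ [0,1] and define the below-target semi-variance of the MNL distribution by TSV_τ(v) = τ²/D(v) + Σ_{i∈S, r_i ≤ τ} (r_i − τ)² · v_i / D(v). Then (a) 0 ≤ TSV_τ(v) ≤ τ² for every v ∈ [0,1]^S; and (b) for all v ≤ v' in [0,1]^S, |TSV_τ(v') − TSV_τ(v)| ≤ (2τ²/D(v)) · Σ_{i∈S}(v'_i − v_i). -/
/-- `D(v) = 1 + ∑_{i∈S} v i`, the MNL normalization constant. -/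
noncomputable def mnlD {ι : Type*} (S : Finset ι) (v : ι → ℝ) : ℝ := 1 + ∑ i ∈ S, v i

/-- The below-target semi-variance with target `τ` of the MNL purchase-profit distribution:
`TSV_τ(v) = τ²/D(v) + ∑_{i∈S, r i ≤ τ} (r i − τ)² v i / D(v)`. -/
noncomputable def mnlTSV {ι : Type*} (S : Finset ι) (r : ι → ℝ) (τ : ℝ) (v : ι → ℝ) : ℝ :=
  τ ^ 2 / mnlD S v + (∑ i ∈ S.filter (fun i => r i ≤ τ), (r i - τ) ^ 2 * v i) / mnlD S v

/-! Write `TSV_τ(v) = N(v) / D(v)` with `N(v) = τ² + ∑ wᵢ vᵢ` and weights `0 ≤ wᵢ ≤ τ²`.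
Then `0 ≤ N ≤ τ² D`, and raising `v` to `v'` raises `N` by at most `τ²` times the increment
`Δ = D(v') - D(v)`; hence the numerator of `N'/D' - N/D = ((N' - N) D - N Δ) / (D D')` lies in
`[-τ² D Δ, τ² D Δ]`, giving `|TSV_τ(v') - TSV_τ(v)| ≤ τ² Δ / D(v') ≤ 2 τ² Δ / D(v)`. -/

theorem abs_div_sub_div_le_of_increment {N N' D D' c : ℝ} (hD : 0 < D) (hDD' : D ≤ D')
    (hN : 0 ≤ N) (hNc : N ≤ c * D) (hN' : N ≤ N') (hN'c : N' - N ≤ c * (D' - D)) :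
    |N' / D' - N / D| ≤ c * (D' - D) / D' := by
  have hD' : 0 < D' := hD.trans_le hDD'
  have hnum : |N' * D - D' * N| ≤ c * (D' - D) * D := by
    rw [abs_le]
    constructor <;> nlinarith [mul_le_mul_of_nonneg_right hNc (sub_nonneg.2 hDD'),
      mul_le_mul_of_nonneg_right hN'c hD.le, mul_nonneg hN (sub_nonneg.2 hDD'),
      mul_nonneg (sub_nonneg.2 hN') hD.le]
  rw [div_sub_div _ _ hD'.ne' hD.ne', abs_div, abs_of_pos (mul_pos hD' hD),
    div_le_div_iff₀ (mul_pos hD' hD) hD']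
  calc |N' * D - D' * N| * D' ≤ c * (D' - D) * D * D' := by gcongr
    _ = c * (D' - D) * (D' * D) := by ring

section WeightedSums

variable {ι : Type*} {S : Finset ι} {w u : ι → ℝ} {c : ℝ}

theorem sum_mul_nonneg_of_weights (hw : ∀ i ∈ S, 0 ≤ w i ∧ w i ≤ c)
    (hu : ∀ i ∈ S, 0 ≤ u i) : 0 ≤ ∑ i ∈ S, w i * u i :=
  Finset.sum_nonneg fun i hi => mul_nonneg (hw i hi).1 (hu i hi)

theorem sum_mul_le_of_weights (hw : ∀ i ∈ S, 0 ≤ w i ∧ w i ≤ c)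
    (hu : ∀ i ∈ S, 0 ≤ u i) : ∑ i ∈ S, w i * u i ≤ c * ∑ i ∈ S, u i := by
  rw [Finset.mul_sum]
  exact Finset.sum_le_sum fun i hi => mul_le_mul_of_nonneg_right (hw i hi).2 (hu i hi)

end WeightedSums

section MNL

variable {ι : Type*} {S : Finset ι} {v v' w : ι → ℝ} {c : ℝ}

theorem mnlD_pos (hv : ∀ i ∈ S, 0 ≤ v i) : 0 < mnlD S v := by
  unfold mnlD
  linarith [Finset.sum_nonneg hv]

theorem mnlD_sub_mnlD : mnlD S v' - mnlD S v = ∑ i ∈ S, (v' i - v i) := by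
  rw [mnlD, mnlD, Finset.sum_sub_distrib]
  ring

theorem div_mnlD_mem_Icc (hc : 0 ≤ c) (hw : ∀ i ∈ S, 0 ≤ w i ∧ w i ≤ c)
    (hv : ∀ i ∈ S, 0 ≤ v i) :
    0 ≤ (c + ∑ i ∈ S, w i * v i) / mnlD S v ∧ (c + ∑ i ∈ S, w i * v i) / mnlD S v ≤ c := by
  have hD := mnlD_pos hv
  refine ⟨div_nonneg (add_nonneg hc (sum_mul_nonneg_of_weights hw hv)) hD.le, ?_⟩
  rw [div_le_iff₀ hD, mnlD]
  linarith [sum_mul_le_of_weights hw hv]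

theorem abs_div_mnlD_sub_le (hc : 0 ≤ c) (hw : ∀ i ∈ S, 0 ≤ w i ∧ w i ≤ c)
    (hv : ∀ i ∈ S, 0 ≤ v i) (hvv' : ∀ i ∈ S, v i ≤ v' i) :
    |(c + ∑ i ∈ S, w i * v' i) / mnlD S v' - (c + ∑ i ∈ S, w i * v i) / mnlD S v| ≤
      c / mnlD S v' * ∑ i ∈ S, (v' i - v i) := by
  have hinc : ∀ i ∈ S, 0 ≤ v' i - v i := fun i hi => sub_nonneg.2 (hvv' i hi)
  have hsum_sub :
      (∑ i ∈ S, w i * v' i) - ∑ i ∈ S, w i * v i = ∑ i ∈ S, w i * (v' i - v i) := by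
    simp only [mul_sub, Finset.sum_sub_distrib]
  have hDD' : mnlD S v ≤ mnlD S v' := by
    linarith [mnlD_sub_mnlD (S := S) (v := v) (v' := v'), Finset.sum_nonneg hinc]
  rw [div_mul_eq_mul_div, ← mnlD_sub_mnlD]
  apply abs_div_sub_div_le_of_increment (mnlD_pos hv) hDD'
    (add_nonneg hc (sum_mul_nonneg_of_weights hw hv))
  · rw [mnlD]
    linarith [sum_mul_le_of_weights hw hv]
  · linarith [sum_mul_nonneg_of_weights hw hinc]
  · rw [mnlD_sub_mnlD]
    linarith [sum_mul_le_of_weights hw hinc]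

end MNL

noncomputable def tsvWeight {ι : Type*} (r : ι → ℝ) (τ : ℝ) (i : ι) : ℝ :=
  if r i ≤ τ then (r i - τ) ^ 2 else 0

theorem tsvWeight_mem_Icc {ι : Type*} {r : ι → ℝ} {τ : ℝ} {i : ι} (hr : 0 ≤ r i) :
    0 ≤ tsvWeight r τ i ∧ tsvWeight r τ i ≤ τ ^ 2 := by
  unfold tsvWeight
  split_ifs with h
  · exact ⟨sq_nonneg _, by nlinarith⟩
  · exact ⟨le_rfl, sq_nonneg τ⟩

theorem mnlTSV_eq {ι : Type*} (S : Finset ι) (r : ι → ℝ) (τ : ℝ) (v : ι → ℝ) :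
    mnlTSV S r τ v = (τ ^ 2 + ∑ i ∈ S, tsvWeight r τ i * v i) / mnlD S v := by
  simp only [mnlTSV, tsvWeight, ite_mul, zero_mul, ← Finset.sum_filter, add_div]

theorem tsv_bounded_and_lipschitz_general {ι : Type*} (S : Finset ι) (r : ι → ℝ)
    (hr : ∀ i ∈ S, 0 < r i ∧ r i ≤ 1) (τ : ℝ) :
    (∀ v : ι → ℝ, (∀ i ∈ S, 0 ≤ v i ∧ v i ≤ 1) →
      0 ≤ mnlTSV S r τ v ∧ mnlTSV S r τ v ≤ τ ^ 2) ∧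
    (∀ v v' : ι → ℝ, (∀ i ∈ S, 0 ≤ v i ∧ v i ≤ 1) → (∀ i ∈ S, 0 ≤ v' i ∧ v' i ≤ 1) →
      (∀ i ∈ S, v i ≤ v' i) →
      |mnlTSV S r τ v' - mnlTSV S r τ v| ≤
        (2 * τ ^ 2 / mnlD S v) * ∑ i ∈ S, (v' i - v i)) := by
  have hw : ∀ i ∈ S, 0 ≤ tsvWeight r τ i ∧ tsvWeight r τ i ≤ τ ^ 2 :=
    fun i hi => tsvWeight_mem_Icc (hr i hi).1.le
  refine ⟨fun v hv => ?_, fun v v' hv _ hvv' => ?_⟩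
  · rw [mnlTSV_eq]
    exact div_mnlD_mem_Icc (sq_nonneg τ) hw fun i hi => (hv i hi).1
  · have hv0 : ∀ i ∈ S, 0 ≤ v i := fun i hi => (hv i hi).1
    have hD := mnlD_pos hv0
    have hΔ : 0 ≤ ∑ i ∈ S, (v' i - v i) :=
      Finset.sum_nonneg fun i hi => sub_nonneg.2 (hvv' i hi)
    have hDD' : mnlD S v ≤ mnlD S v' := by
      linarith [mnlD_sub_mnlD (S := S) (v := v) (v' := v')]
    rw [mnlTSV_eq, mnlTSV_eq]
    calc _ ≤ τ ^ 2 / mnlD S v' * ∑ i ∈ S, (v' i - v i) :=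
          abs_div_mnlD_sub_le (sq_nonneg τ) hw hv0 hvv'
      _ ≤ 2 * τ ^ 2 / mnlD S v * ∑ i ∈ S, (v' i - v i) := by
        gcongr
        linarith [sq_nonneg τ]

/-- **Proposition (below-target semi-variance: boundedness and Lipschitz condition).** -/
theorem tsv_bounded_and_lipschitz {ι : Type*} (S : Finset ι) (r : ι → ℝ)
    (hr : ∀ i ∈ S, 0 < r i ∧ r i ≤ 1) (τ : ℝ) (hτ0 : 0 ≤ τ) (hτ1 : τ ≤ 1) :
    (∀ v : ι → ℝ, (∀ i ∈ S, 0 ≤ v i ∧ v i ≤ 1) →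
      0 ≤ mnlTSV S r τ v ∧ mnlTSV S r τ v ≤ τ ^ 2) ∧
    (∀ v v' : ι → ℝ, (∀ i ∈ S, 0 ≤ v i ∧ v i ≤ 1) → (∀ i ∈ S, 0 ≤ v' i ∧ v' i ≤ 1) →
      (∀ i ∈ S, v i ≤ v' i) →
      |mnlTSV S r τ v' - mnlTSV S r τ v| ≤
        (2 * τ ^ 2 / mnlD S v) * ∑ i ∈ S, (v' i - v i)) :=
  tsv_bounded_and_lipschitz_general S r hr τ
end

section
/- Fix a minimum average reward τ ∈ [0,1] and a regularization factor ε > 0. Define the mean U¹(v) = Σ_{i∈S} r_i v_i / D(v), the below-target semi-variance TSV_τ(v) = τ²/D(v) + Σ_{i∈S, r_i ≤ τ} (r_i − τ)² v_i / D(v), and the Sortino ratio So(v) = (U¹(v) − τ)/√(ε + TSV_τ(v)). Then (a) |So(v)| ≤ 1/√ε for every v ∈ [0,1]^S; and (b) for all v ≤ v' in [0,1]^S, |So(v') − So(v)| ≤ ((2ε^{−1/2} + ε^{−3/2})/D(v)) · Σ_{i∈S}(v'_i − v_i). -/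
/-- The mean of the MNL purchase-profit distribution. -/
noncomputable def mnlMean {ι : Type*} (S : Finset ι) (r : ι → ℝ) (v : ι → ℝ) : ℝ :=
  (∑ i ∈ S, r i * v i) / mnlD S v

/-- The Sortino ratio of the MNL purchase-profit distribution with minimum average reward `τ`
and regularization factor `ε`: `So(v) = (U¹(v) − τ)/√(ε + TSV_τ(v))`. -/
noncomputable def mnlSortino {ι : Type*} (S : Finset ι) (r : ι → ℝ) (τ ε : ℝ)
    (v : ι → ℝ) : ℝ :=
  (mnlMean S r v - τ) / Real.sqrt (ε + mnlTSV S r τ v)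


/-!
Both the mean `U¹` and the semi-variance `TSV_τ` are expectations, under the MNL distribution, of
a payoff with values in `[0, 1]`: the profit itself, and `((τ - profit)⁺)²`. Such an expectation
lies in `[0, 1]`, which gives (a) since the denominator of `So` is at least `√ε`. Raising `v` to
`v'` moves it by at most `2 ∑ (v'ᵢ - vᵢ) / D(v)`: the numerator grows by at most the added mass,
and renormalising by the larger denominator costs at most as much again. Finally
`(A, T) ↦ (A - τ) / √(ε + T)` is `ε^(-1/2)`-Lipschitz in `A` and, for `|A - τ| ≤ 1`,
`ε^(-3/2)/2`-Lipschitz in `T ≥ 0`, which gives (b).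
-/

open Finset

lemma abs_div_add_sub_div_le {a a' d Δ : ℝ} (hd : 0 < d) (ha : 0 ≤ a) (had : a ≤ d)
    (haa' : a ≤ a') (ha'a : a' - a ≤ Δ) : |a' / (d + Δ) - a / d| ≤ 2 * Δ / d := by
  have hΔ : 0 ≤ Δ := (sub_nonneg.2 haa').trans ha'a
  have hdΔ : 0 < d + Δ := by linarith
  have split : a' / (d + Δ) - a / d = (a' - a) / (d + Δ) - a / d * (Δ / (d + Δ)) := by
    field_simp
    ring
  have hnum : |(a' - a) / (d + Δ)| ≤ Δ / (d + Δ) := by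
    rw [abs_of_nonneg (div_nonneg (sub_nonneg.2 haa') hdΔ.le)]
    gcongr
  have hden : |a / d * (Δ / (d + Δ))| ≤ Δ / (d + Δ) := by
    rw [abs_of_nonneg (by positivity)]
    exact mul_le_of_le_one_left (by positivity) ((div_le_one hd).2 had)
  calc |a' / (d + Δ) - a / d|
      ≤ |(a' - a) / (d + Δ)| + |a / d * (Δ / (d + Δ))| := split ▸ abs_sub _ _
    _ ≤ 2 * Δ / (d + Δ) := by rw [two_mul, add_div]; linarith
    _ ≤ 2 * Δ / d := by gcongr; linarith

/-- The expectation under the MNL distribution of the payoff equal to `c` on no purchase and to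
`w i` on the purchase of `i`. -/
noncomputable def mnlExpect {ι : Type*} (S : Finset ι) (c : ℝ) (w v : ι → ℝ) : ℝ :=
  (c + ∑ i ∈ S, w i * v i) / mnlD S v

section MNL

variable {ι : Type*} (S : Finset ι)

lemma one_le_mnlD {v : ι → ℝ} (hv : ∀ i ∈ S, 0 ≤ v i) : 1 ≤ mnlD S v :=
  le_add_of_nonneg_right (sum_nonneg hv)

lemma mnlD_eq_add_sum_sub (v v' : ι → ℝ) :
    mnlD S v' = mnlD S v + ∑ i ∈ S, (v' i - v i) := by
  simp only [mnlD, sum_sub_distrib]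
  ring

variable {S} {c : ℝ} {w v v' : ι → ℝ}

lemma mnlExpect_nonneg (hc : 0 ≤ c) (hw : ∀ i ∈ S, 0 ≤ w i) (hv : ∀ i ∈ S, 0 ≤ v i) :
    0 ≤ mnlExpect S c w v :=
  div_nonneg (add_nonneg hc (sum_nonneg fun i hi => mul_nonneg (hw i hi) (hv i hi)))
    (zero_le_one.trans (one_le_mnlD S hv))

lemma add_sum_mul_le_mnlD (hc : c ≤ 1) (hw : ∀ i ∈ S, w i ≤ 1) (hv : ∀ i ∈ S, 0 ≤ v i) :
    c + ∑ i ∈ S, w i * v i ≤ mnlD S v :=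
  add_le_add hc (sum_le_sum fun i hi => mul_le_of_le_one_left (hv i hi) (hw i hi))

lemma mnlExpect_le_one (hc : c ≤ 1) (hw : ∀ i ∈ S, w i ≤ 1) (hv : ∀ i ∈ S, 0 ≤ v i) :
    mnlExpect S c w v ≤ 1 :=
  div_le_one_of_le₀ (add_sum_mul_le_mnlD hc hw hv) (zero_le_one.trans (one_le_mnlD S hv))

lemma abs_mnlExpect_sub_le (hc : 0 ≤ c ∧ c ≤ 1) (hw : ∀ i ∈ S, 0 ≤ w i ∧ w i ≤ 1)
    (hv : ∀ i ∈ S, 0 ≤ v i) (hvv' : ∀ i ∈ S, v i ≤ v' i) :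
    |mnlExpect S c w v' - mnlExpect S c w v| ≤ 2 * (∑ i ∈ S, (v' i - v i)) / mnlD S v := by
  have hgrowth : (c + ∑ i ∈ S, w i * v' i) - (c + ∑ i ∈ S, w i * v i)
      = ∑ i ∈ S, w i * (v' i - v i) := by
    rw [add_sub_add_left_eq_sub, ← sum_sub_distrib]
    exact sum_congr rfl fun i _ => (mul_sub _ _ _).symm
  have hinc : ∀ i ∈ S, 0 ≤ v' i - v i := fun i hi => sub_nonneg.2 (hvv' i hi)
  rw [mnlExpect, mnlExpect, mnlD_eq_add_sum_sub S v v']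
  refine abs_div_add_sub_div_le (zero_lt_one.trans_le (one_le_mnlD S hv))
    (add_nonneg hc.1 (sum_nonneg fun i hi => mul_nonneg (hw i hi).1 (hv i hi)))
    (add_sum_mul_le_mnlD hc.2 (fun i hi => (hw i hi).2) hv) ?_ ?_
  · rw [← sub_nonneg, hgrowth]
    exact sum_nonneg fun i hi => mul_nonneg (hw i hi).1 (hinc i hi)
  · rw [hgrowth]
    exact sum_le_sum fun i hi => mul_le_of_le_one_left (hinc i hi) (hw i hi).2

end MNL

section Profits

variable {ι : Type*} {S : Finset ι} {r v v' : ι → ℝ} {τ : ℝ}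

lemma mnlMean_eq_mnlExpect : mnlMean S r v = mnlExpect S 0 r v := by
  rw [mnlMean, mnlExpect, zero_add]

lemma mnlTSV_eq_mnlExpect :
    mnlTSV S r τ v = mnlExpect S (τ ^ 2) (fun i => if r i ≤ τ then (r i - τ) ^ 2 else 0) v := by
  simp only [mnlTSV, mnlExpect, add_div, sum_filter, ite_mul, zero_mul]

lemma abs_mnlMean_sub_le_one (hr : ∀ i ∈ S, 0 ≤ r i ∧ r i ≤ 1) (hτ0 : 0 ≤ τ) (hτ1 : τ ≤ 1)
    (hv : ∀ i ∈ S, 0 ≤ v i) : |mnlMean S r v - τ| ≤ 1 := by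
  rw [mnlMean_eq_mnlExpect, abs_sub_le_iff]
  constructor
  · linarith [mnlExpect_le_one zero_le_one (fun i hi => (hr i hi).2) hv]
  · linarith [mnlExpect_nonneg le_rfl (fun i hi => (hr i hi).1) hv]

lemma mnlTSV_nonneg (hv : ∀ i ∈ S, 0 ≤ v i) : 0 ≤ mnlTSV S r τ v := by
  rw [mnlTSV_eq_mnlExpect]
  refine mnlExpect_nonneg (sq_nonneg τ) (fun i _ => ?_) hv
  split_ifs
  exacts [sq_nonneg _, le_rfl]

lemma abs_mnlMean_sub_le (hr : ∀ i ∈ S, 0 ≤ r i ∧ r i ≤ 1) (hv : ∀ i ∈ S, 0 ≤ v i)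
    (hvv' : ∀ i ∈ S, v i ≤ v' i) :
    |mnlMean S r v' - mnlMean S r v| ≤ 2 * (∑ i ∈ S, (v' i - v i)) / mnlD S v := by
  simpa only [mnlMean_eq_mnlExpect] using abs_mnlExpect_sub_le ⟨le_rfl, zero_le_one⟩ hr hv hvv'

lemma abs_mnlTSV_sub_le (hr : ∀ i ∈ S, 0 ≤ r i ∧ r i ≤ 1) (hτ0 : 0 ≤ τ) (hτ1 : τ ≤ 1)
    (hv : ∀ i ∈ S, 0 ≤ v i) (hvv' : ∀ i ∈ S, v i ≤ v' i) :
    |mnlTSV S r τ v' - mnlTSV S r τ v| ≤ 2 * (∑ i ∈ S, (v' i - v i)) / mnlD S v := by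
  have hloss : ∀ i ∈ S, 0 ≤ (if r i ≤ τ then (r i - τ) ^ 2 else 0) ∧
      (if r i ≤ τ then (r i - τ) ^ 2 else 0) ≤ 1 := fun i hi => by
    split_ifs
    · exact ⟨sq_nonneg _, by nlinarith [hr i hi]⟩
    · exact ⟨le_rfl, zero_le_one⟩
  simpa only [mnlTSV_eq_mnlExpect] using
    abs_mnlExpect_sub_le ⟨sq_nonneg τ, pow_le_one₀ hτ0 hτ1⟩ hloss hv hvv'

end Profits

lemma abs_one_div_sqrt_add_sub_le {ε T T' : ℝ} (hε : 0 < ε) (hT : 0 ≤ T) (hT' : 0 ≤ T') :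
    |1 / √(ε + T') - 1 / √(ε + T)| ≤ |T' - T| / (2 * ε * √ε) := by
  set s := √(ε + T)
  set s' := √(ε + T')
  have hεs : 0 < √ε := Real.sqrt_pos.2 hε
  have hs : √ε ≤ s := Real.sqrt_le_sqrt (by linarith)
  have hs' : √ε ≤ s' := Real.sqrt_le_sqrt (by linarith)
  have hs0 : 0 < s := hεs.trans_le hs
  have hs0' : 0 < s' := hεs.trans_le hs'
  have hdiff : T - T' = (s - s') * (s + s') := by
    have hsq : s ^ 2 = ε + T := Real.sq_sqrt (by linarith)
    have hsq' : s' ^ 2 = ε + T' := Real.sq_sqrt (by linarith)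
    linear_combination hsq' - hsq
  have key : 1 / s' - 1 / s = (T - T') / (s * s' * (s + s')) := by
    rw [hdiff]
    field_simp
  have hden : 2 * ε * √ε ≤ s * s' * (s + s') := by
    have hε_eq : ε = √ε * √ε := (Real.mul_self_sqrt hε.le).symm
    calc 2 * ε * √ε = √ε * √ε * (√ε + √ε) := by rw [← hε_eq]; ring
      _ ≤ s * s' * (s + s') := by gcongr
  rw [key, abs_div, abs_of_pos (mul_pos (mul_pos hs0 hs0') (add_pos hs0 hs0')), abs_sub_comm]
  exact div_le_div_of_nonneg_left (abs_nonneg _) (by positivity) hden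

section Sortino

variable {τ ε A A' T T' : ℝ}

lemma abs_sub_div_sqrt_le (hε : 0 < ε) (hA : |A - τ| ≤ 1) (hT : 0 ≤ T) :
    |(A - τ) / √(ε + T)| ≤ 1 / √ε := by
  rw [abs_div, abs_of_nonneg (Real.sqrt_nonneg _)]
  exact div_le_div₀ zero_le_one hA (Real.sqrt_pos.2 hε) (Real.sqrt_le_sqrt (by linarith))

lemma abs_sub_div_sqrt_sub_le {δ : ℝ} (hε : 0 < ε) (hA : |A - τ| ≤ 1) (hT : 0 ≤ T)
    (hT' : 0 ≤ T') (hAA' : |A' - A| ≤ δ) (hTT' : |T' - T| ≤ δ) :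
    |(A' - τ) / √(ε + T') - (A - τ) / √(ε + T)| ≤ δ / √ε + δ / (2 * ε * √ε) := by
  have hεs : 0 < √ε := Real.sqrt_pos.2 hε
  have hs' : √ε ≤ √(ε + T') := Real.sqrt_le_sqrt (by linarith)
  have split : (A' - τ) / √(ε + T') - (A - τ) / √(ε + T)
      = (A' - A) / √(ε + T') + (A - τ) * (1 / √(ε + T') - 1 / √(ε + T)) := by ring
  have hmean : |(A' - A) / √(ε + T')| ≤ δ / √ε := by
    rw [abs_div, abs_of_nonneg (Real.sqrt_nonneg _)]
    exact div_le_div₀ ((abs_nonneg _).trans hAA') hAA' hεs hs'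
  have hvar : |(A - τ) * (1 / √(ε + T') - 1 / √(ε + T))| ≤ δ / (2 * ε * √ε) := by
    rw [abs_mul]
    calc |A - τ| * |1 / √(ε + T') - 1 / √(ε + T)| ≤ 1 * (|T' - T| / (2 * ε * √ε)) :=
          mul_le_mul hA (abs_one_div_sqrt_add_sub_le hε hT hT') (abs_nonneg _) zero_le_one
      _ ≤ δ / (2 * ε * √ε) := by rw [one_mul]; gcongr
  rw [split]
  exact (abs_add_le _ _).trans (add_le_add hmean hvar)

end Sortino

lemma rpow_neg_one_div_two_eq_inv_sqrt {ε : ℝ} (hε : 0 ≤ ε) : ε ^ (-(1 : ℝ) / 2) = (√ε)⁻¹ := by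
  rw [neg_div, Real.rpow_neg hε, ← Real.sqrt_eq_rpow]

lemma rpow_neg_three_div_two_eq_inv_mul_sqrt {ε : ℝ} (hε : 0 < ε) :
    ε ^ (-(3 : ℝ) / 2) = (ε * √ε)⁻¹ := by
  rw [neg_div, Real.rpow_neg hε.le, show (3 : ℝ) / 2 = 1 + 1 / 2 by norm_num,
    Real.rpow_add hε, Real.rpow_one, ← Real.sqrt_eq_rpow]

/-- **Proposition (Sortino ratio: boundedness and Lipschitz condition).** -/
theorem sortino_bounded_and_lipschitz {ι : Type*} (S : Finset ι) (r : ι → ℝ)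
    (hr : ∀ i ∈ S, 0 < r i ∧ r i ≤ 1) (τ ε : ℝ) (hτ0 : 0 ≤ τ) (hτ1 : τ ≤ 1) (hε : 0 < ε) :
    (∀ v : ι → ℝ, (∀ i ∈ S, 0 ≤ v i ∧ v i ≤ 1) →
      |mnlSortino S r τ ε v| ≤ 1 / Real.sqrt ε) ∧
    (∀ v v' : ι → ℝ, (∀ i ∈ S, 0 ≤ v i ∧ v i ≤ 1) → (∀ i ∈ S, 0 ≤ v' i ∧ v' i ≤ 1) →
      (∀ i ∈ S, v i ≤ v' i) →
      |mnlSortino S r τ ε v' - mnlSortino S r τ ε v| ≤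
        ((2 * ε ^ (-(1:ℝ)/2) + ε ^ (-(3:ℝ)/2)) / mnlD S v) * ∑ i ∈ S, (v' i - v i)) := by
  have hr' : ∀ i ∈ S, 0 ≤ r i ∧ r i ≤ 1 := fun i hi => ⟨(hr i hi).1.le, (hr i hi).2⟩
  refine ⟨fun v hv => ?_, fun v v' hv hv' hvv' => ?_⟩
  · exact abs_sub_div_sqrt_le hε (abs_mnlMean_sub_le_one hr' hτ0 hτ1 fun i hi => (hv i hi).1)
      (mnlTSV_nonneg fun i hi => (hv i hi).1)
  have hv0 : ∀ i ∈ S, 0 ≤ v i := fun i hi => (hv i hi).1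
  refine (abs_sub_div_sqrt_sub_le hε (abs_mnlMean_sub_le_one hr' hτ0 hτ1 hv0)
    (mnlTSV_nonneg hv0) (mnlTSV_nonneg fun i hi => (hv' i hi).1)
    (abs_mnlMean_sub_le hr' hv0 hvv') (abs_mnlTSV_sub_le hr' hτ0 hτ1 hv0 hvv')).trans_eq ?_
  rw [rpow_neg_one_div_two_eq_inv_sqrt hε.le, rpow_neg_three_div_two_eq_inv_mul_sqrt hε]
  field_simp
end
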